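/- arXiv:2603.12041 — 3 statements merged into one kernel-verified Lean document; each statement's English description precedes it below -/
import Mathlib

section
/- Let P : [-1,1]² → [0,∞) be continuous, bounded, symmetric (P(w,w_*) = P(w_*,w)) and positive on [-1,1]², let ε > 0 and let 0 < ξ < 1/‖P‖_∞. Let (f_t^S, f_t^I) solve the pure social kinetic system with initial data such that f_0 = f_0^S + f_0^I is a probability measure. Denote ⟨w⟩ = ∫ w df_0(w), ρ^I = ∫ df_0^I and ρ^S = ∫ df_0^S. Then f_t^I converges weakly to ρ^I δ_{⟨w⟩} and f_t^S converges weakly to ρ^S δ_{⟨w⟩} as t → ∞, and there exists C > 0 such that Var[f_t] ≤ Var[f_0] e^{−Ct/ε} for all t ≥ 0, where f_t = f_t^S + f_t^I. -/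
/-!
Testing the equation against `1` and `w` shows that the masses of `fS`, `fI` and, by the
symmetry of `P`, the mean `m` of `f_t` are conserved. Testing against `w²` and symmetrising the
interaction in `(w, w₁)` gives
`d/dt Var[f_t] = -(1/ε) ∬ ξP (1 - ξP) (w₁ - w)² df_t df_t ≤ -(2c/ε) Var[f_t]`,
where `c > 0` is the minimum of `ξP (1 - ξP)` on `[-1,1]²` (positive since `0 < ξP < 1`);
Grönwall gives the exponential decay. Finally a continuous `φ` satisfies
`|φ w - φ m| ≤ η + A_η (w - m)²` on `[-1,1]`, so for `g_t ≤ f_t` of constant mass `ρ`,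
`|∫ φ dg_t - ρ φ(m)| ≤ η ρ + A_η Var[f_t] → η ρ`.
-/

open MeasureTheory Set Filter

noncomputable section

/-- The measure is supported in `[-1,1]`. -/
def SuppIcc (μ : Measure ℝ) : Prop := μ (Icc (-1 : ℝ) 1)ᶜ = 0

/-- Variance of a (probability) measure on `ℝ`. -/
def var (f : Measure ℝ) : ℝ := (∫ w, w ^ 2 ∂f) - (∫ w, w ∂f) ^ 2

/-- `(fS, fI)` solves the pure social kinetic system: for every continuous test function `φ`
and every `t ≥ 0`,
`d/dt ∫φ dfH_t = (1/ε)∬[φ(w + ξP(w,w₁)(w₁-w)) - φ(w)] dfH_t(w) df_t(w₁)`, `H ∈ {S,I}`,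
where `f_t = fS_t + fI_t`. -/
def SolvesPureSocial (ε ξ : ℝ) (P : ℝ → ℝ → ℝ) (fS fI : ℝ → Measure ℝ) : Prop :=
  ∀ φ : C(ℝ, ℝ), ∀ t ∈ Ici (0 : ℝ),
    HasDerivWithinAt (fun s => ∫ w, φ w ∂(fS s))
      ((1 / ε) * ∫ w, ∫ w₁, (φ (w + ξ * P w w₁ * (w₁ - w)) - φ w) ∂(fS t + fI t) ∂(fS t))
      (Ici 0) t ∧
    HasDerivWithinAt (fun s => ∫ w, φ w ∂(fI s))
      ((1 / ε) * ∫ w, ∫ w₁, (φ (w + ξ * P w w₁ * (w₁ - w)) - φ w) ∂(fS t + fI t) ∂(fI t))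
      (Ici 0) t

namespace SuppIcc

variable {μ ν : Measure ℝ}

theorem ae_mem (h : SuppIcc μ) : ∀ᵐ w ∂μ, w ∈ Icc (-1 : ℝ) 1 := ae_iff.2 h

theorem add (hμ : SuppIcc μ) (hν : SuppIcc ν) : SuppIcc (μ + ν) := by
  unfold SuppIcc at *
  simp [hμ, hν]

theorem integrable [IsFiniteMeasure μ] (h : SuppIcc μ) {φ : ℝ → ℝ} (hφ : Continuous φ) :
    Integrable φ μ := by
  rw [← Measure.restrict_eq_self_of_ae_mem h.ae_mem]
  exact hφ.continuousOn.integrableOn_compact isCompact_Icc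

theorem integrable_prod [IsFiniteMeasure μ] [IsFiniteMeasure ν] (hμ : SuppIcc μ)
    (hν : SuppIcc ν) {F : ℝ × ℝ → ℝ} (hF : Continuous F) : Integrable F (μ.prod ν) := by
  rw [← Measure.restrict_eq_self_of_ae_mem hμ.ae_mem,
    ← Measure.restrict_eq_self_of_ae_mem hν.ae_mem, Measure.prod_restrict]
  exact hF.continuousOn.integrableOn_compact (isCompact_Icc.prod isCompact_Icc)

theorem ae_mem_prod [SFinite μ] [SFinite ν] (hμ : SuppIcc μ) (hν : SuppIcc ν) :
    ∀ᵐ p ∂(μ.prod ν), p ∈ Icc (-1 : ℝ) 1 ×ˢ Icc (-1 : ℝ) 1 := by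
  rw [← Measure.restrict_eq_self_of_ae_mem hμ.ae_mem,
    ← Measure.restrict_eq_self_of_ae_mem hν.ae_mem, Measure.prod_restrict]
  exact ae_restrict_mem (measurableSet_Icc.prod measurableSet_Icc)

end SuppIcc

theorem integral_prod_add_swap {μ : Measure ℝ} [SFinite μ] {F : ℝ × ℝ → ℝ}
    (hF : Integrable F (μ.prod μ)) :
    ∫ p, (F p + F p.swap) ∂(μ.prod μ) = 2 * ∫ p, F p ∂(μ.prod μ) := by
  rw [integral_add (g := fun p : ℝ × ℝ => F p.swap) hF hF.swap, integral_prod_swap, two_mul]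

theorem integral_prod_eq_zero_of_swap_eq_neg {μ : Measure ℝ} [SFinite μ] {F : ℝ × ℝ → ℝ}
    (hF : Integrable F (μ.prod μ)) (h : ∀ᵐ p ∂(μ.prod μ), F p.swap = -F p) :
    ∫ p, F p ∂(μ.prod μ) = 0 := by
  have hsum : ∫ p, (F p + F p.swap) ∂(μ.prod μ) = 0 :=
    integral_eq_zero_of_ae (by filter_upwards [h] with p hp using by simp [hp])
  linarith [integral_prod_add_swap hF]

theorem integral_prod_le_of_add_swap_le {μ : Measure ℝ} [SFinite μ] {F H : ℝ × ℝ → ℝ}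
    (hF : Integrable F (μ.prod μ)) (hH : Integrable H (μ.prod μ))
    (h : ∀ᵐ p ∂(μ.prod μ), F p + F p.swap ≤ 2 * H p) :
    ∫ p, F p ∂(μ.prod μ) ≤ ∫ p, H p ∂(μ.prod μ) := by
  have hsum := integral_mono_ae (f := fun p => F p + F p.swap) (hF.add hF.swap) (hH.const_mul 2) h
  rw [integral_prod_add_swap hF, integral_const_mul] at hsum
  linarith

theorem integral_sq_sub_eq_var_add {ν : Measure ℝ} [IsProbabilityMeasure ν] (hν : SuppIcc ν)
    (c : ℝ) : ∫ w, (w - c) ^ 2 ∂ν = var ν + (∫ w, w ∂ν - c) ^ 2 := by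
  have h1 : Integrable (fun w : ℝ => w) ν := hν.integrable continuous_id
  have h2 : Integrable (fun w : ℝ => w ^ 2) ν := hν.integrable (continuous_pow 2)
  have hexp : (fun w : ℝ => (w - c) ^ 2) = fun w => w ^ 2 - 2 * c * w + c ^ 2 := by
    ext w; ring
  rw [hexp, integral_add (f := fun w => w ^ 2 - 2 * c * w) (h2.sub (h1.const_mul _))
    (integrable_const _), integral_sub h2 (h1.const_mul _), integral_const_mul, integral_const,
    var]
  simp only [probReal_univ, one_smul]
  ring

theorem integral_prod_sub_sq {ν : Measure ℝ} [IsProbabilityMeasure ν] (hν : SuppIcc ν) :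
    ∫ p, (p.2 - p.1) ^ 2 ∂(ν.prod ν) = 2 * var ν := by
  have hcomm (a : ℝ) : (∫ w, w ∂ν - a) ^ 2 = (a - ∫ w, w ∂ν) ^ 2 := by ring
  rw [integral_prod _ (hν.integrable_prod hν (by fun_prop))]
  simp only [integral_sq_sub_eq_var_add hν, hcomm]
  rw [integral_add (integrable_const _) (hν.integrable (by fun_prop)),
    integral_sq_sub_eq_var_add hν]
  simp [two_mul]

def socialInteraction (ξ : ℝ) (P : ℝ → ℝ → ℝ) (φ : ℝ → ℝ) (μ ν : Measure ℝ) : ℝ :=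
  ∫ w, ∫ w₁, (φ (w + ξ * P w w₁ * (w₁ - w)) - φ w) ∂ν ∂μ

section socialInteraction

variable {ξ : ℝ} {P : ℝ → ℝ → ℝ} {φ : ℝ → ℝ} {μ ν : Measure ℝ}

theorem continuous_interaction_integrand (hP : Continuous (Function.uncurry P))
    (hφ : Continuous φ) :
    Continuous fun p : ℝ × ℝ => φ (p.1 + ξ * P p.1 p.2 * (p.2 - p.1)) - φ p.1 := by
  have hP' : Continuous fun p : ℝ × ℝ => P p.1 p.2 := hP
  fun_prop

theorem socialInteraction_eq_integral_prod [IsFiniteMeasure μ] [IsFiniteMeasure ν]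
    (hμ : SuppIcc μ) (hν : SuppIcc ν) (hP : Continuous (Function.uncurry P)) (hφ : Continuous φ) :
    socialInteraction ξ P φ μ ν =
      ∫ p, (φ (p.1 + ξ * P p.1 p.2 * (p.2 - p.1)) - φ p.1) ∂(μ.prod ν) :=
  (integral_prod _ (hμ.integrable_prod hν (continuous_interaction_integrand hP hφ))).symm

theorem socialInteraction_add_left {μ₁ μ₂ : Measure ℝ} [IsFiniteMeasure μ₁] [IsFiniteMeasure μ₂]
    [IsFiniteMeasure ν] (hμ₁ : SuppIcc μ₁) (hμ₂ : SuppIcc μ₂) (hν : SuppIcc ν)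
    (hP : Continuous (Function.uncurry P)) (hφ : Continuous φ) :
    socialInteraction ξ P φ (μ₁ + μ₂) ν =
      socialInteraction ξ P φ μ₁ ν + socialInteraction ξ P φ μ₂ ν :=
  integral_add_measure
    (hμ₁.integrable_prod hν (continuous_interaction_integrand hP hφ)).integral_prod_left
    (hμ₂.integrable_prod hν (continuous_interaction_integrand hP hφ)).integral_prod_left

/-- Symmetry of `P` makes each interaction conserve `w + w₁`, hence the mean. -/
theorem socialInteraction_id_self [IsFiniteMeasure ν] (hν : SuppIcc ν)
    (hP : Continuous (Function.uncurry P))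
    (hPsymm : ∀ w ∈ Icc (-1 : ℝ) 1, ∀ w₁ ∈ Icc (-1 : ℝ) 1, P w w₁ = P w₁ w) :
    socialInteraction ξ P id ν ν = 0 := by
  rw [socialInteraction_eq_integral_prod hν hν hP continuous_id]
  refine integral_prod_eq_zero_of_swap_eq_neg
    (hν.integrable_prod hν (continuous_interaction_integrand hP continuous_id)) ?_
  filter_upwards [hν.ae_mem_prod hν] with p hp
  simp only [Prod.fst_swap, Prod.snd_swap, id, hPsymm p.1 hp.1 p.2 hp.2]
  ring

/-- `G(w,w₁) + G(w₁,w) = -2 ξP (1 - ξP) (w₁ - w)²` for `G(w,w₁) = w'² - w²`. -/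
theorem socialInteraction_sq_self_le [IsProbabilityMeasure ν] (hν : SuppIcc ν)
    (hP : Continuous (Function.uncurry P))
    (hPsymm : ∀ w ∈ Icc (-1 : ℝ) 1, ∀ w₁ ∈ Icc (-1 : ℝ) 1, P w w₁ = P w₁ w) {c : ℝ}
    (hc : ∀ w ∈ Icc (-1 : ℝ) 1, ∀ w₁ ∈ Icc (-1 : ℝ) 1, c ≤ ξ * P w w₁ * (1 - ξ * P w w₁)) :
    socialInteraction ξ P (· ^ 2) ν ν ≤ -(2 * c) * var ν := by
  have hsq : Continuous fun w : ℝ => w ^ 2 := continuous_pow 2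
  have hvar : -(2 * c) * var ν = ∫ p, -c * (p.2 - p.1) ^ 2 ∂(ν.prod ν) := by
    rw [integral_const_mul, integral_prod_sub_sq hν]
    ring
  rw [socialInteraction_eq_integral_prod hν hν hP hsq, hvar]
  refine integral_prod_le_of_add_swap_le
    (hν.integrable_prod hν (continuous_interaction_integrand hP hsq))
    (hν.integrable_prod hν (by fun_prop)) ?_
  filter_upwards [hν.ae_mem_prod hν] with p hp
  have hcp := mul_le_mul_of_nonneg_right (hc p.1 hp.1 p.2 hp.2) (sq_nonneg (p.2 - p.1))
  simp only [Prod.fst_swap, Prod.snd_swap, ← hPsymm p.1 hp.1 p.2 hp.2]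
  nlinarith

end socialInteraction

theorem eq_of_hasDerivWithinAt_Ici_zero {g : ℝ → ℝ} {a : ℝ}
    (h : ∀ t ∈ Ici a, HasDerivWithinAt g 0 (Ici a) t) : ∀ t ∈ Ici a, g t = g a := by
  intro t ht
  refine constant_of_has_deriv_right_zero (fun x hx => (h x hx.1).continuousWithinAt.mono
    Icc_subset_Ici_self) (fun x hx => (h x hx.1).mono (Ici_subset_Ici.2 hx.1)) t ⟨ht, le_rfl⟩

theorem le_mul_exp_of_hasDerivWithinAt_le {V D : ℝ → ℝ} {K a : ℝ}
    (hV : ∀ t ∈ Ici a, HasDerivWithinAt V (D t) (Ici a) t) (hD : ∀ t ∈ Ici a, D t ≤ K * V t) :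
    ∀ t ∈ Ici a, V t ≤ V a * Real.exp (K * (t - a)) := by
  intro t ht
  have hgron := le_gronwallBound_of_liminf_deriv_right_le (b := t) (δ := V a) (ε := 0)
    (fun x hx => (hV x hx.1).continuousWithinAt.mono Icc_subset_Ici_self)
    (fun x hx _ hr => ((hV x hx.1).mono (Ici_subset_Ici.2 hx.1)).liminf_right_slope_le hr)
    le_rfl (fun x hx => by simpa using hD x hx.1) t ⟨ht, le_rfl⟩
  rwa [gronwallBound_ε0] at hgron

theorem exists_abs_sub_le_add_mul_sq {φ : ℝ → ℝ} (hφ : Continuous φ) {s : Set ℝ}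
    (hs : IsCompact s) (m : ℝ) {η : ℝ} (hη : 0 < η) :
    ∃ A ≥ 0, ∀ w ∈ s, |φ w - φ m| ≤ η + A * (w - m) ^ 2 := by
  obtain ⟨δ, hδ, hδφ⟩ := Metric.continuousAt_iff.1 hφ.continuousAt η hη
  obtain ⟨B, hB⟩ := hs.exists_bound_of_continuousOn (f := fun w => φ w - φ m) (by fun_prop)
  refine ⟨max B 0 / δ ^ 2, by positivity, fun w hw => ?_⟩
  have hA : 0 ≤ max B 0 / δ ^ 2 * (w - m) ^ 2 := by positivity
  rcases lt_or_ge |w - m| δ with hnear | hfar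
  · have := hδφ (x := w) hnear
    rw [Real.dist_eq] at this
    linarith
  · have hδw : δ ^ 2 ≤ (w - m) ^ 2 := by nlinarith [sq_abs (w - m)]
    have hBw : |φ w - φ m| ≤ max B 0 := (hB w hw).trans (le_max_left _ _)
    calc |φ w - φ m| ≤ max B 0 / δ ^ 2 * δ ^ 2 := by field_simp; exact hBw
      _ ≤ η + max B 0 / δ ^ 2 * (w - m) ^ 2 := by
        nlinarith [mul_le_mul_of_nonneg_left hδw (by positivity : 0 ≤ max B 0 / δ ^ 2)]

theorem abs_integral_sub_le {g : Measure ℝ} [IsFiniteMeasure g] (hg : SuppIcc g) {φ : ℝ → ℝ}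
    (hφ : Continuous φ) {m η A : ℝ}
    (hA : ∀ w ∈ Icc (-1 : ℝ) 1, |φ w - φ m| ≤ η + A * (w - m) ^ 2) :
    |∫ w, φ w ∂g - (g univ).toReal * φ m| ≤
      η * (g univ).toReal + A * ∫ w, (w - m) ^ 2 ∂g := by
  have hsq : Integrable (fun w => A * (w - m) ^ 2) g := hg.integrable (by fun_prop)
  rw [← smul_eq_mul (g univ).toReal, ← measureReal_def, ← integral_const,
    ← integral_sub (hg.integrable hφ) (integrable_const _)]
  calc |∫ w, (φ w - φ m) ∂g| ≤ ∫ w, |φ w - φ m| ∂g := abs_integral_le_integral_abs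
    _ ≤ ∫ w, (η + A * (w - m) ^ 2) ∂g :=
      integral_mono_ae (hg.integrable (by fun_prop)) ((integrable_const η).add hsq)
        (by filter_upwards [hg.ae_mem] with w hw using hA w hw)
    _ = η * (g univ).toReal + A * ∫ w, (w - m) ^ 2 ∂g := by
      rw [integral_add (integrable_const η) hsq, integral_const, integral_const_mul,
        smul_eq_mul, measureReal_def, mul_comm]

theorem tendsto_integral_of_le_of_tendsto_integral_sq_sub {ι : Type*} {l : Filter ι}
    {g ν : ι → Measure ℝ} {ρ m : ℝ}
    (hg : ∀ᶠ i in l, IsFiniteMeasure (ν i) ∧ SuppIcc (ν i) ∧ g i ≤ ν i ∧ (g i univ).toReal = ρ)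
    (hdev : Tendsto (fun i => ∫ w, (w - m) ^ 2 ∂(ν i)) l (nhds 0)) {φ : ℝ → ℝ}
    (hφ : Continuous φ) : Tendsto (fun i => ∫ w, φ w ∂(g i)) l (nhds (ρ * φ m)) := by
  rw [Metric.tendsto_nhds]
  intro r hr
  set η := r / (2 * (|ρ| + 1))
  have hηρ : η * ρ < r / 2 := by
    rw [div_mul_eq_mul_div, div_lt_div_iff₀ (by positivity) two_pos]
    nlinarith [le_abs_self ρ, abs_nonneg ρ]
  obtain ⟨A, hA0, hA⟩ := exists_abs_sub_le_add_mul_sq hφ isCompact_Icc m (η := η) (by positivity)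
  have hsmall : ∀ᶠ i in l, A * ∫ w, (w - m) ^ 2 ∂(ν i) < r / 2 := by
    have := hdev.const_mul A
    rw [mul_zero] at this
    exact this.eventually (eventually_lt_nhds (half_pos hr))
  filter_upwards [hg, hsmall] with i ⟨hfin, hsupp, hle, hmass⟩ hi
  have : IsFiniteMeasure (g i) := isFiniteMeasure_of_le (ν i) hle
  have hsupp_g : SuppIcc (g i) := nonpos_iff_eq_zero.1 ((hle _).trans hsupp.le)
  have hdev_le : ∫ w, (w - m) ^ 2 ∂(g i) ≤ ∫ w, (w - m) ^ 2 ∂(ν i) :=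
    integral_mono_measure hle (Eventually.of_forall fun w => sq_nonneg _)
      (hsupp.integrable (by fun_prop))
  rw [Real.dist_eq, ← hmass]
  calc _ ≤ η * (g i univ).toReal + A * ∫ w, (w - m) ^ 2 ∂(g i) :=
        abs_integral_sub_le hsupp_g hφ hA
    _ < r := by rw [hmass]; nlinarith

theorem exists_pos_le_mul_one_sub {ξ : ℝ} {P : ℝ → ℝ → ℝ} (hP : Continuous (Function.uncurry P))
    (hPpos : ∀ w ∈ Icc (-1 : ℝ) 1, ∀ w₁ ∈ Icc (-1 : ℝ) 1, 0 < P w w₁) (hξpos : 0 < ξ)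
    (hξ : ξ < 1 / sSup (Set.image2 P (Icc (-1 : ℝ) 1) (Icc (-1 : ℝ) 1))) :
    ∃ c > 0, ∀ w ∈ Icc (-1 : ℝ) 1, ∀ w₁ ∈ Icc (-1 : ℝ) 1, c ≤ ξ * P w w₁ * (1 - ξ * P w w₁) := by
  have hK : IsCompact (Set.image2 P (Icc (-1 : ℝ) 1) (Icc (-1 : ℝ) 1)) := by
    rw [← Set.image_uncurry_prod]
    exact (isCompact_Icc.prod isCompact_Icc).image hP
  have hξP : ∀ w ∈ Icc (-1 : ℝ) 1, ∀ w₁ ∈ Icc (-1 : ℝ) 1, ξ * P w w₁ < 1 := by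
    intro w hw w₁ hw₁
    have hle := le_csSup hK.bddAbove (Set.mem_image2_of_mem hw hw₁)
    rw [lt_one_div hξpos (hPpos w hw w₁ hw₁ |>.trans_le hle)] at hξ
    rw [← lt_div_iff₀' hξpos]
    exact hle.trans_lt hξ
  obtain ⟨q, hq, hmin⟩ := (isCompact_Icc.prod isCompact_Icc).exists_isMinOn
    (show (Icc (-1 : ℝ) 1 ×ˢ Icc (-1 : ℝ) 1).Nonempty from ⟨(0, 0), by norm_num⟩)
    (f := fun q : ℝ × ℝ => ξ * P q.1 q.2 * (1 - ξ * P q.1 q.2))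
    (by have : Continuous fun q : ℝ × ℝ => P q.1 q.2 := hP; fun_prop)
  refine ⟨_, ?_, fun w hw w₁ hw₁ => hmin (show (w, w₁) ∈ _ from ⟨hw, hw₁⟩)⟩
  have := hξP q.1 hq.1 q.2 hq.2
  have := hPpos q.1 hq.1 q.2 hq.2
  simp only
  nlinarith [mul_pos hξpos this]

namespace SolvesPureSocial

variable {ε ξ : ℝ} {P : ℝ → ℝ → ℝ} {fS fI : ℝ → Measure ℝ}

theorem measure_univ_toReal_eq (hsol : SolvesPureSocial ε ξ P fS fI) :
    ∀ t ∈ Ici (0 : ℝ), ((fS t) univ).toReal = ((fS 0) univ).toReal ∧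
      ((fI t) univ).toReal = ((fI 0) univ).toReal := by
  have hderiv := fun t ht => hsol (ContinuousMap.const ℝ 1) t ht
  simp only [ContinuousMap.const_apply, sub_self, integral_zero, mul_zero, integral_const,
    smul_eq_mul, mul_one, measureReal_def] at hderiv
  exact fun t ht => ⟨eq_of_hasDerivWithinAt_Ici_zero (fun s hs => (hderiv s hs).1) t ht,
    eq_of_hasDerivWithinAt_Ici_zero (fun s hs => (hderiv s hs).2) t ht⟩

theorem isProbabilityMeasure_add (hsol : SolvesPureSocial ε ξ P fS fI)
    (hreg : ∀ t ∈ Ici (0 : ℝ), IsFiniteMeasure (fS t) ∧ IsFiniteMeasure (fI t) ∧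
      SuppIcc (fS t) ∧ SuppIcc (fI t))
    (h0 : IsProbabilityMeasure (fS 0 + fI 0)) :
    ∀ t ∈ Ici (0 : ℝ), IsProbabilityMeasure (fS t + fI t) := by
  intro t ht
  obtain ⟨_, _, -, -⟩ := hreg t ht
  obtain ⟨_, _, -, -⟩ := hreg 0 self_mem_Ici
  obtain ⟨hmS, hmI⟩ := hsol.measure_univ_toReal_eq t ht
  have h1 := congrArg ENNReal.toReal h0.measure_univ
  constructor
  rw [← ENNReal.toReal_eq_one_iff]
  simp only [Measure.add_apply, ENNReal.toReal_add (measure_ne_top _ _) (measure_ne_top _ _),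
    hmS, hmI, ENNReal.toReal_one] at h1 ⊢
  exact h1

theorem hasDerivWithinAt_integral_add (hsol : SolvesPureSocial ε ξ P fS fI)
    (hP : Continuous (Function.uncurry P))
    (hreg : ∀ t ∈ Ici (0 : ℝ), IsFiniteMeasure (fS t) ∧ IsFiniteMeasure (fI t) ∧
      SuppIcc (fS t) ∧ SuppIcc (fI t))
    (φ : C(ℝ, ℝ)) {t : ℝ} (ht : t ∈ Ici (0 : ℝ)) :
    HasDerivWithinAt (fun s => ∫ w, φ w ∂(fS s + fI s))
      ((1 / ε) * socialInteraction ξ P φ (fS t + fI t) (fS t + fI t)) (Ici 0) t := by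
  obtain ⟨_, _, hS, hI⟩ := hreg t ht
  rw [socialInteraction_add_left hS hI (hS.add hI) hP φ.continuous, mul_add]
  refine ((hsol φ t ht).1.add (hsol φ t ht).2).congr_of_mem (fun s hs => ?_) ht
  obtain ⟨_, _, hSs, hIs⟩ := hreg s hs
  exact integral_add_measure (hSs.integrable φ.continuous) (hIs.integrable φ.continuous)

theorem integral_id_add_eq (hsol : SolvesPureSocial ε ξ P fS fI)
    (hP : Continuous (Function.uncurry P))
    (hPsymm : ∀ w ∈ Icc (-1 : ℝ) 1, ∀ w₁ ∈ Icc (-1 : ℝ) 1, P w w₁ = P w₁ w)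
    (hreg : ∀ t ∈ Ici (0 : ℝ), IsFiniteMeasure (fS t) ∧ IsFiniteMeasure (fI t) ∧
      SuppIcc (fS t) ∧ SuppIcc (fI t)) :
    ∀ t ∈ Ici (0 : ℝ), ∫ w, w ∂(fS t + fI t) = ∫ w, w ∂(fS 0 + fI 0) :=
  eq_of_hasDerivWithinAt_Ici_zero fun t ht => by
    obtain ⟨_, _, hS, hI⟩ := hreg t ht
    simpa [socialInteraction_id_self (hS.add hI) hP hPsymm] using
      hsol.hasDerivWithinAt_integral_add hP hreg (ContinuousMap.id ℝ) ht

theorem var_add_le (hsol : SolvesPureSocial ε ξ P fS fI) (hε : 0 < ε)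
    (hP : Continuous (Function.uncurry P))
    (hPsymm : ∀ w ∈ Icc (-1 : ℝ) 1, ∀ w₁ ∈ Icc (-1 : ℝ) 1, P w w₁ = P w₁ w)
    (hreg : ∀ t ∈ Ici (0 : ℝ), IsFiniteMeasure (fS t) ∧ IsFiniteMeasure (fI t) ∧
      SuppIcc (fS t) ∧ SuppIcc (fI t))
    (h0 : IsProbabilityMeasure (fS 0 + fI 0)) {c : ℝ}
    (hc : ∀ w ∈ Icc (-1 : ℝ) 1, ∀ w₁ ∈ Icc (-1 : ℝ) 1, c ≤ ξ * P w w₁ * (1 - ξ * P w w₁)) :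
    ∀ t ∈ Ici (0 : ℝ), var (fS t + fI t) ≤ var (fS 0 + fI 0) * Real.exp (-(2 * c) * t / ε) := by
  have hmean := hsol.integral_id_add_eq hP hPsymm hreg
  have hderiv (t : ℝ) (ht : t ∈ Ici (0 : ℝ)) : HasDerivWithinAt (fun s => var (fS s + fI s))
      ((1 / ε) * socialInteraction ξ P (· ^ 2) (fS t + fI t) (fS t + fI t)) (Ici 0) t := by
    refine ((hsol.hasDerivWithinAt_integral_add hP hreg ⟨(· ^ 2), continuous_pow 2⟩ ht).sub_const
      ((∫ w, w ∂(fS 0 + fI 0)) ^ 2)).congr_of_mem (fun s hs => ?_) ht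
    rw [var, hmean s hs]
    rfl
  have hdissip (t : ℝ) (ht : t ∈ Ici (0 : ℝ)) :
      (1 / ε) * socialInteraction ξ P (· ^ 2) (fS t + fI t) (fS t + fI t) ≤
        -(2 * c / ε) * var (fS t + fI t) := by
    have := hsol.isProbabilityMeasure_add hreg h0 t ht
    obtain ⟨_, _, hS, hI⟩ := hreg t ht
    calc _ ≤ (1 / ε) * (-(2 * c) * var (fS t + fI t)) := by
          gcongr
          exact socialInteraction_sq_self_le (hS.add hI) hP hPsymm hc
      _ = _ := by ring
  intro t ht
  convert le_mul_exp_of_hasDerivWithinAt_le hderiv hdissip t ht using 3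
  ring

theorem tendsto_integral_sq_sub (hsol : SolvesPureSocial ε ξ P fS fI) (hε : 0 < ε)
    (hP : Continuous (Function.uncurry P))
    (hPsymm : ∀ w ∈ Icc (-1 : ℝ) 1, ∀ w₁ ∈ Icc (-1 : ℝ) 1, P w w₁ = P w₁ w)
    (hreg : ∀ t ∈ Ici (0 : ℝ), IsFiniteMeasure (fS t) ∧ IsFiniteMeasure (fI t) ∧
      SuppIcc (fS t) ∧ SuppIcc (fI t))
    (h0 : IsProbabilityMeasure (fS 0 + fI 0)) {C : ℝ} (hC : 0 < C)
    (hvar : ∀ t ∈ Ici (0 : ℝ),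
      var (fS t + fI t) ≤ var (fS 0 + fI 0) * Real.exp (-C * t / ε)) :
    Tendsto (fun t => ∫ w, (w - ∫ u, u ∂(fS 0 + fI 0)) ^ 2 ∂(fS t + fI t)) atTop (nhds 0) := by
  have hdev (t : ℝ) (ht : t ∈ Ici (0 : ℝ)) :
      ∫ w, (w - ∫ u, u ∂(fS 0 + fI 0)) ^ 2 ∂(fS t + fI t) = var (fS t + fI t) := by
    have := hsol.isProbabilityMeasure_add hreg h0 t ht
    obtain ⟨_, _, hS, hI⟩ := hreg t ht
    rw [integral_sq_sub_eq_var_add (hS.add hI), hsol.integral_id_add_eq hP hPsymm hreg t ht,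
      sub_self, zero_pow two_ne_zero, add_zero]
  have hexp : Tendsto (fun t => var (fS 0 + fI 0) * Real.exp (-C * t / ε)) atTop (nhds 0) := by
    have hlin : Tendsto (fun t : ℝ => -C * t / ε) atTop atBot := by
      simp_rw [neg_mul, neg_div, mul_div_right_comm]
      exact tendsto_neg_atTop_atBot.comp (tendsto_id.const_mul_atTop (div_pos hC hε))
    simpa using (Real.tendsto_exp_atBot.comp hlin).const_mul (var (fS 0 + fI 0))
  refine squeeze_zero' (Eventually.of_forall fun t => integral_nonneg fun w => sq_nonneg _) ?_ hexp
  filter_upwards [eventually_ge_atTop 0] with t ht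
  exact (hdev t ht).trans_le (hvar t ht)

end SolvesPureSocial

/-- **Convergence to consensus.** If `P` is continuous, bounded, symmetric and positive on
`[-1,1]²` and `0 < ξ < 1/‖P‖_∞`, then `fI_t → ρ^I δ_{⟨w⟩}` and `fS_t → ρ^S δ_{⟨w⟩}` weakly
as `t → ∞`, and the variance of `f_t = fS_t + fI_t` decays exponentially:
`Var[f_t] ≤ Var[f_0] e^{-Ct/ε}` for some `C > 0`. -/
theorem consensus_pure_social
    (ε ξ : ℝ) (hε : 0 < ε) (hξpos : 0 < ξ)
    (P : ℝ → ℝ → ℝ)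
    (hPcont : Continuous (Function.uncurry P))
    (hPsymm : ∀ w ∈ Icc (-1 : ℝ) 1, ∀ w₁ ∈ Icc (-1 : ℝ) 1, P w w₁ = P w₁ w)
    (hPpos : ∀ w ∈ Icc (-1 : ℝ) 1, ∀ w₁ ∈ Icc (-1 : ℝ) 1, 0 < P w w₁)
    (hξ : ξ < 1 / sSup (Set.image2 P (Icc (-1 : ℝ) 1) (Icc (-1 : ℝ) 1)))
    (fS fI : ℝ → Measure ℝ)
    (hreg : ∀ t ∈ Ici (0 : ℝ), IsFiniteMeasure (fS t) ∧ IsFiniteMeasure (fI t) ∧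
      SuppIcc (fS t) ∧ SuppIcc (fI t))
    (h0 : IsProbabilityMeasure (fS 0 + fI 0))
    (hsol : SolvesPureSocial ε ξ P fS fI) :
    (∀ φ : C(ℝ, ℝ),
      Tendsto (fun t => ∫ w, φ w ∂(fI t)) atTop
        (nhds (((fI 0) univ).toReal * φ (∫ w, w ∂(fS 0 + fI 0))))) ∧
    (∀ φ : C(ℝ, ℝ),
      Tendsto (fun t => ∫ w, φ w ∂(fS t)) atTop
        (nhds (((fS 0) univ).toReal * φ (∫ w, w ∂(fS 0 + fI 0))))) ∧
    (∃ C > 0, ∀ t ∈ Ici (0 : ℝ),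
      var (fS t + fI t) ≤ var (fS 0 + fI 0) * Real.exp (-C * t / ε)) := by
  obtain ⟨c, hc, hcP⟩ := exists_pos_le_mul_one_sub hPcont hPpos hξpos hξ
  have hvar := hsol.var_add_le hε hPcont hPsymm hreg h0 hcP
  have hdev := hsol.tendsto_integral_sq_sub hε hPcont hPsymm hreg h0 (by positivity) hvar
  have hlim {g : ℝ → Measure ℝ} (hle : ∀ t ∈ Ici (0 : ℝ), g t ≤ fS t + fI t)
      (hmass : ∀ t ∈ Ici (0 : ℝ), (g t univ).toReal = (g 0 univ).toReal) (φ : C(ℝ, ℝ)) :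
      Tendsto (fun t => ∫ w, φ w ∂(g t)) atTop
        (nhds ((g 0 univ).toReal * φ (∫ w, w ∂(fS 0 + fI 0)))) := by
    refine tendsto_integral_of_le_of_tendsto_integral_sq_sub ?_ hdev φ.continuous
    filter_upwards [eventually_ge_atTop 0] with t ht
    obtain ⟨_, _, hS, hI⟩ := hreg t ht
    exact ⟨inferInstance, hS.add hI, hle t ht, hmass t ht⟩
  have hmass := hsol.measure_univ_toReal_eq
  exact ⟨hlim (fun _ _ => Measure.le_add_left le_rfl) (fun t ht => (hmass t ht).2),
    hlim (fun _ _ => Measure.le_add_right le_rfl) (fun t ht => (hmass t ht).1),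
    2 * c, by positivity, hvar⟩
end
end

section
/- Let P : [-1,1]² → [0,∞) be bounded, measurable and symmetric with P(w,w_*) ≥ c for some constant c > 0 and all w, w_* ∈ [-1,1], let ε > 0 and 0 < ξ < 1/‖P‖_∞, and let (f_t^S, f_t^I) solve the pure social kinetic system with f_t = f_t^S + f_t^I a probability measure for all t. Then the variance of f_t decays exponentially: Var[f_t] ≤ Var[f_0] exp(−2ξc(1 − ξ‖P‖_∞) t / ε) for all t ≥ 0. -/
/-!
Exponential variance decay for the pure social kinetic system when `P` is bounded below.
-/

open MeasureTheory Set Filter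

noncomputable section

namespace VDA

lemma ae_mem_Icc {f : Measure ℝ} (h : SuppIcc f) : ∀ᵐ w ∂f, w ∈ Icc (-1:ℝ) 1 := by
  rw [ae_iff]
  have : {w : ℝ | ¬ w ∈ Icc (-1:ℝ) 1} = (Icc (-1:ℝ) 1)ᶜ := rfl
  rw [this]; exact h

lemma suppIcc_add {μ ν : Measure ℝ} (hμ : SuppIcc μ) (hν : SuppIcc ν) : SuppIcc (μ + ν) := by
  unfold SuppIcc at *
  rw [Measure.add_apply, hμ, hν, add_zero]

lemma ae_prod_mem {μ ν : Measure ℝ} [SFinite μ] [SFinite ν] (hμ : SuppIcc μ) (hν : SuppIcc ν) :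
    ∀ᵐ p ∂(μ.prod ν), p.1 ∈ Icc (-1:ℝ) 1 ∧ p.2 ∈ Icc (-1:ℝ) 1 := by
  have h1 : ∀ᵐ p ∂(μ.prod ν), p.1 ∈ Icc (-1:ℝ) 1 := by
    rw [ae_iff]
    have : {p : ℝ×ℝ | ¬ p.1 ∈ Icc (-1:ℝ) 1} = ((Icc (-1:ℝ) 1)ᶜ) ×ˢ (univ : Set ℝ) := by
      ext p; simp
    rw [this, Measure.prod_prod, hμ, zero_mul]
  have h2 : ∀ᵐ p ∂(μ.prod ν), p.2 ∈ Icc (-1:ℝ) 1 := by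
    rw [ae_iff]
    have : {p : ℝ×ℝ | ¬ p.2 ∈ Icc (-1:ℝ) 1} = (univ : Set ℝ) ×ˢ ((Icc (-1:ℝ) 1)ᶜ) := by
      ext p; simp
    rw [this, Measure.prod_prod, hν, mul_zero]
  exact h1.and h2

lemma integrable_of_bdd {α} [MeasurableSpace α] {m : Measure α} [IsFiniteMeasure m] {F : α → ℝ}
    (hmeas : AEStronglyMeasurable F m) {C : ℝ} (h : ∀ᵐ x ∂m, |F x| ≤ C) : Integrable F m :=
  Integrable.mono' (integrable_const C) hmeas (by simpa [Real.norm_eq_abs] using h)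

/-- Sum of iterated integrals over `μ`, `ν` equals a product-measure integral. -/
lemma sum_iterated (F : ℝ → ℝ → ℝ) (hFmeas : Measurable (Function.uncurry F)) (C : ℝ)
    (hbd : ∀ w ∈ Icc (-1:ℝ) 1, ∀ w₁ ∈ Icc (-1:ℝ) 1, |F w w₁| ≤ C)
    (μ ν : Measure ℝ) [IsFiniteMeasure μ] [IsFiniteMeasure ν]
    (hμ : SuppIcc μ) (hν : SuppIcc ν) :
    (∫ w, ∫ w₁, F w w₁ ∂(μ + ν) ∂μ) + (∫ w, ∫ w₁, F w w₁ ∂(μ + ν) ∂ν)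
      = ∫ p : ℝ × ℝ, F p.1 p.2 ∂((μ + ν).prod (μ + ν)) := by
  have hf : SuppIcc (μ + ν) := suppIcc_add hμ hν
  have hintμ : Integrable (Function.uncurry F) (μ.prod (μ + ν)) :=
    integrable_of_bdd hFmeas.aestronglyMeasurable
      ((ae_prod_mem hμ hf).mono fun p hp => hbd _ hp.1 _ hp.2)
  have hintν : Integrable (Function.uncurry F) (ν.prod (μ + ν)) :=
    integrable_of_bdd hFmeas.aestronglyMeasurable
      ((ae_prod_mem hν hf).mono fun p hp => hbd _ hp.1 _ hp.2)
  rw [integral_integral hintμ, integral_integral hintν, Measure.add_prod]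
  exact (integral_add_measure hintμ hintν).symm

/-- Symmetrization identity. -/
lemma integral_symmetrize (F : ℝ × ℝ → ℝ) (f : Measure ℝ) [IsFiniteMeasure f]
    (hint : Integrable F (f.prod f)) :
    ∫ p, F p ∂(f.prod f) = (1/2) * ∫ p, (F p + F p.swap) ∂(f.prod f) := by
  have hsw : Integrable (fun p : ℝ × ℝ => F p.swap) (f.prod f) := hint.swap
  have h2 : ∫ p : ℝ × ℝ, F p.swap ∂(f.prod f) = ∫ p, F p ∂(f.prod f) := integral_prod_swap F
  rw [integral_add hint hsw, h2]; ring

/-- Second moment of the difference equals twice the variance. -/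
lemma integral_sq_diff (f : Measure ℝ) [IsProbabilityMeasure f] (hf : SuppIcc f) :
    ∫ p : ℝ × ℝ, (p.1 - p.2)^2 ∂(f.prod f) = 2 * var f := by
  have hae := ae_prod_mem hf hf
  have habs : ∀ w ∈ Icc (-1:ℝ) 1, |w| ≤ 1 := fun w hw => abs_le.2 ⟨hw.1, hw.2⟩
  have hint1 : Integrable (fun p : ℝ × ℝ => p.1^2) (f.prod f) := by
    refine integrable_of_bdd (C := 1) (measurable_fst.pow_const 2).aestronglyMeasurable
      (hae.mono fun p hp => ?_)
    have := habs _ hp.1; rw [abs_pow]; nlinarith [abs_nonneg p.1]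
  have hint2 : Integrable (fun p : ℝ × ℝ => p.2^2) (f.prod f) := by
    refine integrable_of_bdd (C := 1) (measurable_snd.pow_const 2).aestronglyMeasurable
      (hae.mono fun p hp => ?_)
    have := habs _ hp.2; rw [abs_pow]; nlinarith [abs_nonneg p.2]
  have hint3 : Integrable (fun p : ℝ × ℝ => p.1 * p.2) (f.prod f) := by
    refine integrable_of_bdd (C := 1) (measurable_fst.mul measurable_snd).aestronglyMeasurable
      (hae.mono fun p hp => ?_)
    rw [abs_mul]
    calc |p.1| * |p.2| ≤ 1 * 1 :=
      mul_le_mul (habs _ hp.1) (habs _ hp.2) (abs_nonneg _) zero_le_one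
    _ = 1 := by ring
  have hsplit : (fun p : ℝ × ℝ => (p.1 - p.2)^2)
      = fun p => (p.1^2 + p.2^2) - 2 * (p.1 * p.2) := by
    funext p; ring
  rw [hsplit]
  have h4 : Integrable (fun p : ℝ × ℝ => p.1^2 + p.2^2) (f.prod f) := hint1.add hint2
  rw [integral_sub h4 (hint3.const_mul 2), integral_add hint1 hint2, integral_const_mul]
  have e1 : ∫ p : ℝ × ℝ, p.1^2 ∂(f.prod f) = ∫ w, w^2 ∂f := by
    have := integral_prod_mul (μ := f) (ν := f) (fun w : ℝ => w^2) (fun _ : ℝ => (1:ℝ))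
    simpa using this
  have e2 : ∫ p : ℝ × ℝ, p.2^2 ∂(f.prod f) = ∫ w, w^2 ∂f := by
    have := integral_prod_mul (μ := f) (ν := f) (fun _ : ℝ => (1:ℝ)) (fun w : ℝ => w^2)
    simpa using this
  have e3 : ∫ p : ℝ × ℝ, p.1 * p.2 ∂(f.prod f) = (∫ w, w ∂f) * ∫ w, w ∂f := by
    have := integral_prod_mul (μ := f) (ν := f) (fun w : ℝ => w) (fun w : ℝ => w)
    simpa using this
  rw [e1, e2, e3]; unfold var; ring

/-- Splitting the moments of a sum of measures supported in `[-1,1]`. -/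
lemma moments_add (μ ν : Measure ℝ) [IsFiniteMeasure μ] [IsFiniteMeasure ν]
    (hμ : SuppIcc μ) (hν : SuppIcc ν) :
    (∫ w, w ∂(μ + ν)) = (∫ w, w ∂μ) + (∫ w, w ∂ν) ∧
    (∫ w, w^2 ∂(μ + ν)) = (∫ w, w^2 ∂μ) + (∫ w, w^2 ∂ν) := by
  have b1 : ∀ w ∈ Icc (-1:ℝ) 1, |w| ≤ 1 := fun w hw => abs_le.2 ⟨hw.1, hw.2⟩
  have b2 : ∀ w ∈ Icc (-1:ℝ) 1, |w^2| ≤ 1 := by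
    intro w hw; rw [abs_pow]; nlinarith [b1 w hw, abs_nonneg w]
  have i1μ : Integrable (fun w : ℝ => w) μ :=
    integrable_of_bdd (C := 1) measurable_id.aestronglyMeasurable
      ((ae_mem_Icc hμ).mono fun w hw => b1 w hw)
  have i1ν : Integrable (fun w : ℝ => w) ν :=
    integrable_of_bdd (C := 1) measurable_id.aestronglyMeasurable
      ((ae_mem_Icc hν).mono fun w hw => b1 w hw)
  have i2μ : Integrable (fun w : ℝ => w^2) μ :=
    integrable_of_bdd (C := 1) (measurable_id.pow_const 2).aestronglyMeasurable
      ((ae_mem_Icc hμ).mono fun w hw => b2 w hw)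
  have i2ν : Integrable (fun w : ℝ => w^2) ν :=
    integrable_of_bdd (C := 1) (measurable_id.pow_const 2).aestronglyMeasurable
      ((ae_mem_Icc hν).mono fun w hw => b2 w hw)
  exact ⟨integral_add_measure i1μ i1ν, integral_add_measure i2μ i2ν⟩

/-- The key collision estimates. -/
lemma collision_key (ξ c S : ℝ) (hξpos : 0 < ξ) (hc : 0 < c) (hξS : ξ * S < 1)
    (P : ℝ → ℝ → ℝ) (hPmeas : Measurable (Function.uncurry P))
    (hPlow : ∀ w ∈ Icc (-1:ℝ) 1, ∀ w₁ ∈ Icc (-1:ℝ) 1, c ≤ P w w₁)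
    (hPub : ∀ w ∈ Icc (-1:ℝ) 1, ∀ w₁ ∈ Icc (-1:ℝ) 1, P w w₁ ≤ S)
    (hPsymm : ∀ w ∈ Icc (-1:ℝ) 1, ∀ w₁ ∈ Icc (-1:ℝ) 1, P w w₁ = P w₁ w)
    (μ ν : Measure ℝ) [IsFiniteMeasure μ] [IsFiniteMeasure ν]
    (hμ : SuppIcc μ) (hν : SuppIcc ν) (hprob : IsProbabilityMeasure (μ + ν)) :
    ((∫ w, ∫ w₁, ((w + ξ * P w w₁ * (w₁ - w)) - w) ∂(μ + ν) ∂μ) +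
      ∫ w, ∫ w₁, ((w + ξ * P w w₁ * (w₁ - w)) - w) ∂(μ + ν) ∂ν) = 0 ∧
    ((∫ w, ∫ w₁, ((w + ξ * P w w₁ * (w₁ - w))^2 - w^2) ∂(μ + ν) ∂μ) +
      ∫ w, ∫ w₁, ((w + ξ * P w w₁ * (w₁ - w))^2 - w^2) ∂(μ + ν) ∂ν)
      ≤ -(2 * ξ * c * (1 - ξ * S)) * var (μ + ν) := by
  have hS : 0 < S := lt_of_lt_of_le hc ((hPlow 0 (by norm_num) 0 (by norm_num)).trans
    (hPub 0 (by norm_num) 0 (by norm_num)))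
  set f : Measure ℝ := μ + ν with hfdef
  have hf : SuppIcc f := by
    unfold SuppIcc at *; rw [hfdef, Measure.add_apply, hμ, hν, add_zero]
  have hae := ae_prod_mem (μ := f) (ν := f) hf hf
  have hP2 : Measurable (fun p : ℝ × ℝ => P p.1 p.2) := hPmeas
  have hPabs : ∀ w ∈ Icc (-1:ℝ) 1, ∀ w₁ ∈ Icc (-1:ℝ) 1, |P w w₁| ≤ S := by
    intro w hw w₁ hw₁
    rw [abs_of_pos (lt_of_lt_of_le hc (hPlow w hw w₁ hw₁))]
    exact hPub w hw w₁ hw₁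
  have hdiff : ∀ w ∈ Icc (-1:ℝ) 1, ∀ w₁ ∈ Icc (-1:ℝ) 1, |w₁ - w| ≤ 2 := by
    intro w hw w₁ hw₁
    rw [abs_sub_le_iff]; constructor <;> [skip; skip] <;>
      · obtain ⟨a1, a2⟩ := hw; obtain ⟨b1, b2⟩ := hw₁; linarith
  have hkick : ∀ w ∈ Icc (-1:ℝ) 1, ∀ w₁ ∈ Icc (-1:ℝ) 1,
      |ξ * P w w₁ * (w₁ - w)| ≤ ξ * S * 2 := by
    intro w hw w₁ hw₁
    rw [abs_mul, abs_mul, abs_of_pos hξpos]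
    have h1 := hPabs w hw w₁ hw₁; have h2 := hdiff w hw w₁ hw₁
    linarith [mul_le_mul_of_nonneg_left
      (mul_le_mul h1 h2 (abs_nonneg _) hS.le) hξpos.le]
  set F1 : ℝ → ℝ → ℝ := fun w w₁ => (w + ξ * P w w₁ * (w₁ - w)) - w with hF1
  set F2 : ℝ → ℝ → ℝ := fun w w₁ => (w + ξ * P w w₁ * (w₁ - w))^2 - w^2 with hF2
  have hF1meas : Measurable (Function.uncurry F1) :=
    (measurable_fst.add ((measurable_const.mul hP2).mul
      (measurable_snd.sub measurable_fst))).sub measurable_fst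
  have hF2meas : Measurable (Function.uncurry F2) :=
    ((measurable_fst.add ((measurable_const.mul hP2).mul
      (measurable_snd.sub measurable_fst))).pow_const 2).sub (measurable_fst.pow_const 2)
  have hF1bd : ∀ w ∈ Icc (-1:ℝ) 1, ∀ w₁ ∈ Icc (-1:ℝ) 1, |F1 w w₁| ≤ ξ * S * 2 := by
    intro w hw w₁ hw₁
    have : F1 w w₁ = ξ * P w w₁ * (w₁ - w) := by rw [hF1]; ring
    rw [this]; exact hkick w hw w₁ hw₁
  have hF2bd : ∀ w ∈ Icc (-1:ℝ) 1, ∀ w₁ ∈ Icc (-1:ℝ) 1,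
      |F2 w w₁| ≤ ξ * S * 2 * (2 + ξ * S * 2) := by
    intro w hw w₁ hw₁
    have habsw : |w| ≤ 1 := abs_le.2 ⟨hw.1, hw.2⟩
    have hk := hkick w hw w₁ hw₁
    have : F2 w w₁ = (ξ * P w w₁ * (w₁ - w)) * (2 * w + ξ * P w w₁ * (w₁ - w)) := by
      rw [hF2]; ring
    rw [this, abs_mul]
    have h3 : |2 * w + ξ * P w w₁ * (w₁ - w)| ≤ 2 + ξ * S * 2 := by
      calc |2 * w + ξ * P w w₁ * (w₁ - w)| ≤ |2 * w| + |ξ * P w w₁ * (w₁ - w)| := abs_add_le _ _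
      _ ≤ 2 + ξ * S * 2 := by rw [abs_mul]; simp only [abs_two]; nlinarith [abs_nonneg w]
    have := abs_nonneg (ξ * P w w₁ * (w₁ - w))
    nlinarith [abs_nonneg (2 * w + ξ * P w w₁ * (w₁ - w))]
  have hint1 : Integrable (fun p : ℝ × ℝ => F1 p.1 p.2) (f.prod f) :=
    integrable_of_bdd hF1meas.aestronglyMeasurable
      (hae.mono fun p hp => hF1bd _ hp.1 _ hp.2)
  have hint2 : Integrable (fun p : ℝ × ℝ => F2 p.1 p.2) (f.prod f) :=
    integrable_of_bdd hF2meas.aestronglyMeasurable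
      (hae.mono fun p hp => hF2bd _ hp.1 _ hp.2)
  constructor
  · rw [sum_iterated F1 hF1meas _ hF1bd μ ν hμ hν]
    rw [integral_symmetrize (fun p : ℝ × ℝ => F1 p.1 p.2) f hint1]
    have hzero : ∀ᵐ p ∂(f.prod f),
        F1 p.1 p.2 + F1 (p.swap).1 (p.swap).2 = (0 : ℝ) := by
      refine hae.mono fun p hp => ?_
      simp only [Prod.fst_swap, Prod.snd_swap, hF1]
      rw [hPsymm p.2 hp.2 p.1 hp.1]; ring
    rw [integral_congr_ae hzero, integral_zero, mul_zero]
  · rw [sum_iterated F2 hF2meas _ hF2bd μ ν hμ hν]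
    rw [integral_symmetrize (fun p : ℝ × ℝ => F2 p.1 p.2) f hint2]
    set H : ℝ × ℝ → ℝ := fun p =>
      -(2 * ξ) * (P p.1 p.2 * (1 - ξ * P p.1 p.2)) * (p.1 - p.2)^2 with hH
    have heq : ∀ᵐ p ∂(f.prod f),
        F2 p.1 p.2 + F2 (p.swap).1 (p.swap).2 = H p := by
      refine hae.mono fun p hp => ?_
      simp only [Prod.fst_swap, Prod.snd_swap, hF2, hH]
      rw [hPsymm p.2 hp.2 p.1 hp.1]; ring
    have hintsum : Integrable
        (fun p : ℝ × ℝ => F2 p.1 p.2 + F2 (p.swap).1 (p.swap).2) (f.prod f) := by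
      have := hint2.swap (μ := f) (ν := f)
      exact hint2.add this
    have hintH : Integrable H (f.prod f) := hintsum.congr heq
    have hintq : Integrable (fun p : ℝ × ℝ => (p.1 - p.2)^2) (f.prod f) := by
      refine integrable_of_bdd (C := 4)
        ((measurable_fst.sub measurable_snd).pow_const 2).aestronglyMeasurable
        (hae.mono fun p hp => ?_)
      have h1 : |p.1| ≤ 1 := abs_le.2 ⟨hp.1.1, hp.1.2⟩
      have h2 : |p.2| ≤ 1 := abs_le.2 ⟨hp.2.1, hp.2.2⟩
      rw [abs_pow]
      nlinarith [abs_sub_abs_le_abs_sub p.1 p.2, abs_sub (p.1) (p.2), abs_nonneg (p.1 - p.2),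
        abs_sub_le p.1 0 p.2, abs_nonneg p.1, abs_nonneg p.2]
    have hintR : Integrable
        (fun p : ℝ × ℝ => -(2 * ξ * c * (1 - ξ * S)) * (p.1 - p.2)^2) (f.prod f) :=
      hintq.const_mul _
    have hle : ∀ᵐ p ∂(f.prod f),
        H p ≤ -(2 * ξ * c * (1 - ξ * S)) * (p.1 - p.2)^2 := by
      refine hae.mono fun p hp => ?_
      simp only [hH]
      have ha1 := hPlow p.1 hp.1 p.2 hp.2
      have ha2 := hPub p.1 hp.1 p.2 hp.2
      have hq : (0:ℝ) ≤ (p.1 - p.2)^2 := sq_nonneg _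
      have key : c * (1 - ξ * S) ≤ P p.1 p.2 * (1 - ξ * P p.1 p.2) := by
        nlinarith [mul_nonneg (sub_nonneg.2 ha1) (by linarith : (0:ℝ) ≤ 1 - ξ * S),
          mul_nonneg (mul_nonneg hξpos.le (le_trans hc.le ha1)) (sub_nonneg.2 ha2)]
      nlinarith [mul_le_mul_of_nonneg_right key (mul_nonneg (by linarith : (0:ℝ) ≤ 2 * ξ) hq)]
    calc (1/2 : ℝ) * ∫ p, (F2 p.1 p.2 + F2 (p.swap).1 (p.swap).2) ∂(f.prod f)
        = (1/2 : ℝ) * ∫ p, H p ∂(f.prod f) := by rw [integral_congr_ae heq]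
      _ ≤ (1/2 : ℝ) * ∫ p, -(2 * ξ * c * (1 - ξ * S)) * (p.1 - p.2)^2 ∂(f.prod f) := by
          have := integral_mono_ae hintH hintR hle
          linarith
      _ = (1/2 : ℝ) * (-(2 * ξ * c * (1 - ξ * S)) * ∫ p : ℝ × ℝ, (p.1 - p.2)^2 ∂(f.prod f)) := by
          rw [integral_const_mul]
      _ = (1/2 : ℝ) * (-(2 * ξ * c * (1 - ξ * S)) * (2 * var f)) := by
          rw [integral_sq_diff f hf]
      _ = -(2 * ξ * c * (1 - ξ * S)) * var f := by ring

end VDA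

open Topology in
/-- **Exponential decay of the variance.** If `P` is bounded, measurable, symmetric and
bounded below by `c > 0` on `[-1,1]²`, and `0 < ξ < 1/‖P‖_∞`, then
`Var[f_t] ≤ Var[f_0] exp(-2ξc(1 - ξ‖P‖_∞)t/ε)` for all `t ≥ 0`, where `f_t = fS_t + fI_t` and
`‖P‖_∞` is the supremum of `P` over `[-1,1]²`. -/
theorem variance_exponential_decay_pure_social
    (ε ξ c : ℝ) (hε : 0 < ε) (hξpos : 0 < ξ) (hc : 0 < c)
    (P : ℝ → ℝ → ℝ)
    (hPmeas : Measurable (Function.uncurry P))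
    (hPbdd : BddAbove (Set.image2 P (Icc (-1 : ℝ) 1) (Icc (-1 : ℝ) 1)))
    (hPlow : ∀ w ∈ Icc (-1 : ℝ) 1, ∀ w₁ ∈ Icc (-1 : ℝ) 1, c ≤ P w w₁)
    (hPsymm : ∀ w ∈ Icc (-1 : ℝ) 1, ∀ w₁ ∈ Icc (-1 : ℝ) 1, P w w₁ = P w₁ w)
    (hξ : ξ < 1 / sSup (Set.image2 P (Icc (-1 : ℝ) 1) (Icc (-1 : ℝ) 1)))
    (fS fI : ℝ → Measure ℝ)
    (hreg : ∀ t ∈ Ici (0 : ℝ), IsFiniteMeasure (fS t) ∧ IsFiniteMeasure (fI t) ∧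
      SuppIcc (fS t) ∧ SuppIcc (fI t) ∧ IsProbabilityMeasure (fS t + fI t))
    (hsol : SolvesPureSocial ε ξ P fS fI) :
    ∀ t ∈ Ici (0 : ℝ),
      var (fS t + fI t) ≤ var (fS 0 + fI 0) *
        Real.exp (-(2 * ξ * c *
          (1 - ξ * sSup (Set.image2 P (Icc (-1 : ℝ) 1) (Icc (-1 : ℝ) 1)))) * t / ε) := by
  intro t ht
  set S := sSup (Set.image2 P (Icc (-1 : ℝ) 1) (Icc (-1 : ℝ) 1)) with hSdef
  have h00 : (0:ℝ) ∈ Icc (-1:ℝ) 1 := by norm_num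
  have hPub : ∀ w ∈ Icc (-1:ℝ) 1, ∀ w₁ ∈ Icc (-1:ℝ) 1, P w w₁ ≤ S := fun w hw w₁ hw₁ =>
    le_csSup hPbdd (mem_image2_of_mem hw hw₁)
  have hS : 0 < S := lt_of_lt_of_le hc ((hPlow 0 h00 0 h00).trans (hPub 0 h00 0 h00))
  have hξS : ξ * S < 1 := (lt_div_iff₀ hS).1 hξ
  set A := 2 * ξ * c * (1 - ξ * S) with hA
  -- the first moment has zero derivative
  set m : ℝ → ℝ := fun r => (∫ w, w ∂(fS r)) + ∫ w, w ∂(fI r) with hmdef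
  have hm : ∀ s ∈ Ici (0:ℝ), HasDerivWithinAt m 0 (Ici 0) s := by
    intro s hs
    obtain ⟨h1, h2, h3, h4, h5⟩ := hreg s hs
    haveI := h1; haveI := h2; haveI := h5
    have hder := hsol (ContinuousMap.id ℝ) s hs
    simp only [ContinuousMap.id_apply] at hder
    have hsum := hder.1.add hder.2
    rw [← mul_add] at hsum
    have hkey := (VDA.collision_key ξ c S hξpos hc hξS P hPmeas hPlow hPub hPsymm
      (fS s) (fI s) h3 h4 h5).1
    rw [hkey, mul_zero] at hsum
    exact hsum
  -- the second moment dissipates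
  set e : ℝ → ℝ := fun r => (∫ w, w^2 ∂(fS r)) + ∫ w, w^2 ∂(fI r) with hedef
  set D : ℝ → ℝ := fun s => (1/ε) *
      ((∫ w, ∫ w₁, ((w + ξ * P w w₁ * (w₁ - w))^2 - w^2) ∂(fS s + fI s) ∂(fS s)) +
        ∫ w, ∫ w₁, ((w + ξ * P w w₁ * (w₁ - w))^2 - w^2) ∂(fS s + fI s) ∂(fI s)) with hDdef
  have heD : ∀ s ∈ Ici (0:ℝ), HasDerivWithinAt e (D s) (Ici 0) s := by
    intro s hs
    have hder := hsol ⟨fun w => w^2, by continuity⟩ s hs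
    simp only [ContinuousMap.coe_mk] at hder
    have hsum := hder.1.add hder.2
    rw [← mul_add] at hsum
    exact hsum
  have hDle : ∀ s ∈ Ici (0:ℝ), D s ≤ -(A/ε) * var (fS s + fI s) := by
    intro s hs
    obtain ⟨h1, h2, h3, h4, h5⟩ := hreg s hs
    haveI := h1; haveI := h2; haveI := h5
    have hkey := (VDA.collision_key ξ c S hξpos hc hξS P hPmeas hPlow hPub hPsymm
      (fS s) (fI s) h3 h4 h5).2
    have h1ε : (0:ℝ) ≤ 1/ε := by positivity
    have hstep : D s ≤ (1/ε) * (-A * var (fS s + fI s)) := by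
      rw [hA]
      exact mul_le_mul_of_nonneg_left hkey h1ε
    calc D s ≤ (1/ε) * (-A * var (fS s + fI s)) := hstep
      _ = -(A/ε) * var (fS s + fI s) := by ring
  -- the first moment is constant
  have hmconst : ∀ s ∈ Ici (0:ℝ), m s = m 0 := by
    intro s hs
    have hcont : ContinuousOn m (Icc 0 s) := fun x hx =>
      ((hm x hx.1).continuousWithinAt).mono Icc_subset_Ici_self
    exact constant_of_has_deriv_right_zero hcont
      (fun x hx => (hm x hx.1).mono (Ici_subset_Ici.2 hx.1)) s (right_mem_Icc.2 hs)
  -- the shifted energy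
  set V : ℝ → ℝ := fun r => e r - (m 0)^2 with hVdef
  have hVderiv : ∀ s ∈ Ici (0:ℝ), HasDerivWithinAt V (D s) (Ici 0) s := fun s hs =>
    (heD s hs).sub_const _
  have hvarV : ∀ s ∈ Ici (0:ℝ), var (fS s + fI s) = V s := by
    intro s hs
    obtain ⟨h1, h2, h3, h4, h5⟩ := hreg s hs
    haveI := h1; haveI := h2
    obtain ⟨e1, e2⟩ := VDA.moments_add (fS s) (fI s) h3 h4
    have : var (fS s + fI s) = e s - (m s)^2 := by
      unfold var; rw [e1, e2]
    rw [this, hmconst s hs]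
  -- Grönwall
  have hVcont : ContinuousOn V (Icc 0 t) := fun x hx =>
    ((hVderiv x hx.1).continuousWithinAt).mono Icc_subset_Ici_self
  have hslope : ∀ x ∈ Ico (0:ℝ) t, ∀ r, D x < r →
      ∃ᶠ z in 𝓝[>] x, (z - x)⁻¹ * (V z - V x) < r := by
    intro x hx r hr
    have h := ((hVderiv x hx.1).mono (Ici_subset_Ici.2 hx.1)).liminf_right_slope_le hr
    refine h.mono fun z hz => ?_
    rwa [slope_def_field, div_eq_inv_mul] at hz
  have hbound : ∀ x ∈ Ico (0:ℝ) t, D x ≤ -(A/ε) * V x + 0 := by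
    intro x hx
    rw [add_zero]
    have h := hDle x hx.1
    rwa [hvarV x hx.1] at h
  have hgron : ∀ x ∈ Icc (0:ℝ) t, V x ≤ gronwallBound (V 0) (-(A/ε)) 0 (x - 0) :=
    le_gronwallBound_of_liminf_deriv_right_le hVcont hslope le_rfl hbound
  have hVt := hgron t (right_mem_Icc.2 ht)
  rw [gronwallBound_ε0] at hVt
  rw [hvarV t ht, hvarV 0 self_mem_Ici]
  have harg : -(A/ε) * (t - 0) = -A * t / ε := by ring
  rwa [harg] at hVt
end
end

section
/- Let ξ > 0, σ² > 0, set κ = σ²/ξ, and let m ∈ (−1,1). Define S[m] : (−1,1) → ℝ by S[m](w) = (1+w)^{(1+m)/κ − 1} (1−w)^{(1−m)/κ − 1} / (2^{2/κ − 1} B((1+m)/κ, (1−m)/κ)), where B is the Beta function. Then S[m] is a stationary solution of the opinion Fokker–Planck equation with diffusion coefficient D(w)² = 1 − w²: for every w ∈ (−1,1), ξ(w − m) S[m](w) + (σ²/2) · d/dw[(1 − w²) S[m](w)] = 0. -/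
/-!
The Beta-type distribution `S[m]` in `\eqref{eq.state}` is a stationary solution of the
opinion Fokker–Planck equation with diffusion coefficient `D(w)² = 1 - w²`.
-/

open Set

noncomputable section

/-- The Euler Beta function `B(a,b) = ∫₀¹ t^{a-1}(1-t)^{b-1} dt`. -/
def betaFn (a b : ℝ) : ℝ := ∫ t in (0 : ℝ)..1, t ^ (a - 1) * (1 - t) ^ (b - 1)

/-- The Beta-type steady state
`S[m](w) = (1+w)^{(1+m)/κ - 1}(1-w)^{(1-m)/κ - 1} / (2^{2/κ - 1} B((1+m)/κ, (1-m)/κ))`. -/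
def steadyState (κ m w : ℝ) : ℝ :=
  (1 + w) ^ ((1 + m) / κ - 1) * (1 - w) ^ ((1 - m) / κ - 1) /
    ((2 : ℝ) ^ (2 / κ - 1) * betaFn ((1 + m) / κ) ((1 - m) / κ))

/-- **Stationarity of the Beta-type distribution.** For `ξ, σ² > 0`, `κ = σ²/ξ` and
`m ∈ (-1,1)`, the function `S[m]` satisfies, for every `w ∈ (-1,1)`,
`ξ(w - m)S[m](w) + (σ²/2) d/dw[(1 - w²)S[m](w)] = 0`. -/
theorem steady_state_is_stationary (ξ σ2 m : ℝ) (hξ : 0 < ξ) (hσ : 0 < σ2)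
    (hm : m ∈ Ioo (-1 : ℝ) 1) :
    ∀ w ∈ Ioo (-1 : ℝ) 1,
      ξ * (w - m) * steadyState (σ2 / ξ) m w +
        σ2 / 2 * deriv (fun v => (1 - v ^ 2) * steadyState (σ2 / ξ) m v) w = 0 := by
  intro w hw
  obtain ⟨hw1, hw2⟩ := hw
  have hκpos : 0 < σ2 / ξ := div_pos hσ hξ
  set κ := σ2 / ξ with hκ
  set a := (1 + m) / κ with ha
  set b := (1 - m) / κ with hb
  set C := (2 : ℝ) ^ (2 / κ - 1) * betaFn a b with hC
  have h1 : (0:ℝ) < 1 + w := by linarith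
  have h2 : (0:ℝ) < 1 - w := by linarith
  have hd1 : HasDerivAt (fun v : ℝ => (1 + v)) 1 w := by
    simpa using (hasDerivAt_id w).const_add 1
  have hd2 : HasDerivAt (fun v : ℝ => (1 - v)) (-1) w := by
    simpa using (hasDerivAt_id w).const_sub 1
  have hda : HasDerivAt (fun v : ℝ => (1 + v) ^ a) (a * (1 + w) ^ (a - 1)) w := by
    simpa using hd1.rpow_const (Or.inl (ne_of_gt h1))
  have hdb : HasDerivAt (fun v : ℝ => (1 - v) ^ b) (b * (1 - w) ^ (b - 1) * (-1)) w := by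
    simpa using hd2.rpow_const (Or.inl (ne_of_gt h2))
  have hg : HasDerivAt (fun v : ℝ => (1 + v) ^ a * (1 - v) ^ b / C)
      ((a * (1 + w) ^ (a - 1) * (1 - w) ^ b +
        (1 + w) ^ a * (b * (1 - w) ^ (b - 1) * (-1))) / C) w :=
    (hda.mul hdb).div_const C
  have rpow_split : ∀ v : ℝ, 0 < (1 + v) → 0 < (1 - v) →
      (1 + v) ^ a = (1 + v) * (1 + v) ^ (a - 1) ∧
      (1 - v) ^ b = (1 - v) * (1 - v) ^ (b - 1) := by
    intro v hv1 hv2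
    constructor
    · calc (1 + v) ^ a = (1 + v) ^ (1 + (a - 1)) := by congr 1; ring
      _ = (1 + v) * (1 + v) ^ (a - 1) := by rw [Real.rpow_add hv1, Real.rpow_one]
    · calc (1 - v) ^ b = (1 - v) ^ (1 + (b - 1)) := by congr 1; ring
      _ = (1 - v) * (1 - v) ^ (b - 1) := by rw [Real.rpow_add hv2, Real.rpow_one]
  have heq : (fun v => (1 - v ^ 2) * steadyState κ m v) =ᶠ[nhds w]
      (fun v : ℝ => (1 + v) ^ a * (1 - v) ^ b / C) := by
    filter_upwards [Ioo_mem_nhds hw1 hw2] with v hv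
    obtain ⟨hv1, hv2⟩ := hv
    have hv1' : (0:ℝ) < 1 + v := by linarith
    have hv2' : (0:ℝ) < 1 - v := by linarith
    obtain ⟨e1, e2⟩ := rpow_split v hv1' hv2'
    show (1 - v ^ 2) * steadyState κ m v = _
    rw [steadyState, e1, e2]
    ring
  have hderiv : deriv (fun v => (1 - v ^ 2) * steadyState κ m v) w =
      (a * (1 + w) ^ (a - 1) * (1 - w) ^ b +
        (1 + w) ^ a * (b * (1 - w) ^ (b - 1) * (-1))) / C := by
    rw [heq.deriv_eq, hg.deriv]
  rw [hderiv, steadyState]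
  obtain ⟨E1, E2⟩ := rpow_split w h1 h2
  rw [E1, E2]
  set P := (1 + w) ^ (a - 1) with hP
  set Q := (1 - w) ^ (b - 1) with hQ
  have hscal : ξ * (w - m) + σ2 / 2 * (a * (1 - w) - b * (1 + w)) = 0 := by
    rw [ha, hb, hκ]
    field_simp
    ring
  linear_combination (P * Q / C) * hscal
end
end
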